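/- Let N ≥ 2 and define on the half-space ℝ^N_+ = {(x,y) : x ∈ ℝ^{N−1}, y > 0} the function U_N(x,y) = ω_{N−1}^{−1/(N−1)} log √((|x|² + (1+y)²)/(|x|² + (1−y)²)). Then U_N is N-harmonic on ℝ^N_+ \ {(0,1)}, i.e., div(|∇U_N|^{N−2} ∇U_N) = 0 there. -/

import Mathlib

/-!
With `e = e_N`, `U_N = c log (‖w + e‖ / ‖w - e‖)`, and its gradient is `(c / P) V` where
`P = ‖w - e‖² ‖w + e‖²` and `V = ‖w - e‖² (w + e) - ‖w + e‖² (w - e)`. Since `‖V‖² = 4 ‖e‖² P`,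
the flux `|∇U|^{N-2} ∇U` is a constant multiple of `P^{-N/2} V`. Two polynomial identities,
`div V = N (‖w - e‖² - ‖w + e‖²)` and `∇P · V = 2 (‖w - e‖² - ‖w + e‖²) P`, then make the
divergence of `P^{-N/2} V` vanish.
-/

open Real

/-- Surface area `ω_{N−1}` of the unit sphere `S^{N−1} ⊂ ℝ^N`. -/
noncomputable def sphereArea (N : ℕ) : ℝ :=
  2 * Real.pi ^ ((N : ℝ) / 2) / Real.Gamma ((N : ℝ) / 2)

/-- `|x|² + (1−y)²` for `z = (x, y) ∈ ℝ^{n} × ℝ`. -/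
noncomputable def AA {n : ℕ} (z : EuclideanSpace ℝ (Fin (n + 1))) : ℝ :=
  (∑ i : Fin n, z (Fin.castSucc i) ^ 2) + (1 - z (Fin.last n)) ^ 2

/-- `|x|² + (1+y)²` for `z = (x, y) ∈ ℝ^{n} × ℝ`. -/
noncomputable def BB {n : ℕ} (z : EuclideanSpace ℝ (Fin (n + 1))) : ℝ :=
  (∑ i : Fin n, z (Fin.castSucc i) ^ 2) + (1 + z (Fin.last n)) ^ 2

/-- `U_N(x,y) = ω_{N−1}^{−1/(N−1)} log √((|x|²+(1+y)²)/(|x|²+(1−y)²))`, `N = n+1`. -/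
noncomputable def UN {n : ℕ} (z : EuclideanSpace ℝ (Fin (n + 1))) : ℝ :=
  sphereArea (n + 1) ^ (-(1 : ℝ) / n) * Real.log (Real.sqrt (BB z / AA z))

/-- The vector field `|∇U_N|^{N−2} ∇U_N`, whose divergence is the `N`-Laplacian of `U_N`. -/
noncomputable def FN {n : ℕ} (w : EuclideanSpace ℝ (Fin (n + 1))) :
    EuclideanSpace ℝ (Fin (n + 1)) :=
  ‖gradient UN w‖ ^ (n - 1) • gradient UN w

open InnerProductSpace Module Topology

section Divergence

variable {E : Type*} [NormedAddCommGroup E] [InnerProductSpace ℝ E]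

noncomputable def divergence (F : E → E) (w : E) : ℝ :=
  LinearMap.trace ℝ E (fderiv ℝ F w)

variable {F G : E → E} {f : E → ℝ} {w : E}

theorem divergence_smul [FiniteDimensional ℝ E] (hf : DifferentiableAt ℝ f w)
    (hG : DifferentiableAt ℝ G w) :
    divergence (fun v ↦ f v • G v) w = f w * divergence G w + fderiv ℝ f w (G w) := by
  simp [divergence, fderiv_fun_smul hf hG, LinearMap.trace_smulRight]

theorem divergence_sub (hF : DifferentiableAt ℝ F w) (hG : DifferentiableAt ℝ G w) :
    divergence (fun v ↦ F v - G v) w = divergence F w - divergence G w := by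
  simp [divergence, fderiv_fun_sub hF hG]

theorem divergence_add_const [FiniteDimensional ℝ E] (a : E) :
    divergence (fun v ↦ v + a) w = finrank ℝ E := by
  simp [divergence, LinearMap.trace_id]

theorem divergence_sub_const [FiniteDimensional ℝ E] (a : E) :
    divergence (fun v ↦ v - a) w = finrank ℝ E := by
  simp [divergence, fderiv_sub_const]

theorem divergence_eq_sum {ι : Type*} [Fintype ι] [DecidableEq ι]
    (F : EuclideanSpace ℝ ι → EuclideanSpace ℝ ι) (w : EuclideanSpace ℝ ι) :
    divergence F w = ∑ i, fderiv ℝ F w (EuclideanSpace.single i 1) i := by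
  rw [divergence, LinearMap.trace_eq_sum_inner _ (EuclideanSpace.basisFun ι ℝ)]
  simp [PiLp.inner_apply]

end Divergence

section Dipole

variable {E : Type*} [NormedAddCommGroup E] (e : E) {w : E}

theorem norm_sub_ne_zero (he : w ≠ e) : ‖w - e‖ ≠ 0 :=
  norm_ne_zero_iff.2 (sub_ne_zero.2 he)

theorem norm_add_ne_zero (he' : w ≠ -e) : ‖w + e‖ ≠ 0 :=
  norm_ne_zero_iff.2 (by rwa [← sub_neg_eq_add, sub_ne_zero])

noncomputable def sqDistProd (w : E) : ℝ := ‖w - e‖ ^ 2 * ‖w + e‖ ^ 2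

theorem sqDistProd_pos (he : w ≠ e) (he' : w ≠ -e) : 0 < sqDistProd e w := by
  have := norm_sub_ne_zero e he
  have := norm_add_ne_zero e he'
  unfold sqDistProd
  positivity

variable [InnerProductSpace ℝ E]

noncomputable def dipoleField (w : E) : E := ‖w - e‖ ^ 2 • (w + e) - ‖w + e‖ ^ 2 • (w - e)

theorem hasFDerivAt_norm_sub_sq (a w : E) :
    HasFDerivAt (fun v ↦ ‖v - a‖ ^ 2) (2 • innerSL ℝ (w - a)) w := by
  simpa using ((hasFDerivAt_id w).sub_const a).norm_sq

theorem hasFDerivAt_norm_add_sq (a w : E) :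
    HasFDerivAt (fun v ↦ ‖v + a‖ ^ 2) (2 • innerSL ℝ (w + a)) w := by
  simpa using ((hasFDerivAt_id w).add_const a).norm_sq

theorem norm_dipoleField : ‖dipoleField e w‖ = 2 * ‖e‖ * √(sqDistProd e w) := by
  have hsq : ‖dipoleField e w‖ ^ 2 = (2 * ‖e‖) ^ 2 * sqDistProd e w := by
    rw [← real_inner_self_eq_norm_sq]
    simp only [dipoleField, sqDistProd, inner_sub_left, inner_sub_right, inner_add_left,
      inner_add_right, inner_smul_left, inner_smul_right, real_inner_self_eq_norm_sq,
      real_inner_comm w e, norm_sub_sq_real, norm_add_sq_real, RCLike.conj_to_real]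
    ring
  rw [← sqrt_sq (norm_nonneg _), hsq, sqrt_mul (by positivity), sqrt_sq (by positivity)]

theorem hasFDerivAt_sqDistProd (w : E) :
    HasFDerivAt (sqDistProd e)
      (‖w - e‖ ^ 2 • 2 • innerSL ℝ (w + e) + ‖w + e‖ ^ 2 • 2 • innerSL ℝ (w - e)) w :=
  (hasFDerivAt_norm_sub_sq e w).fun_mul (hasFDerivAt_norm_add_sq e w)

theorem fderiv_sqDistProd_dipoleField :
    fderiv ℝ (sqDistProd e) w (dipoleField e w)
      = 2 * (‖w - e‖ ^ 2 - ‖w + e‖ ^ 2) * sqDistProd e w := by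
  rw [(hasFDerivAt_sqDistProd e w).fderiv]
  simp only [dipoleField, sqDistProd, add_apply,
    smul_apply, innerSL_apply_apply, inner_sub_right, inner_add_right,
    inner_smul_right, smul_eq_mul, nsmul_eq_mul, inner_add_left, inner_sub_left,
    real_inner_self_eq_norm_sq, real_inner_comm w e, norm_sub_sq_real, norm_add_sq_real]
  ring

theorem differentiable_dipoleField : Differentiable ℝ (dipoleField e) := by
  have hsub : Differentiable ℝ fun v : E ↦ v - e := by fun_prop
  have hadd : Differentiable ℝ fun v : E ↦ v + e := by fun_prop
  exact ((hsub.norm_sq ℝ).smul hadd).sub ((hadd.norm_sq ℝ).smul hsub)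

theorem divergence_dipoleField [FiniteDimensional ℝ E] :
    divergence (dipoleField e) w = (‖w - e‖ ^ 2 - ‖w + e‖ ^ 2) * finrank ℝ E := by
  have hA := hasFDerivAt_norm_sub_sq e w
  have hB := hasFDerivAt_norm_add_sq e w
  unfold dipoleField
  have hdA : DifferentiableAt ℝ (fun v ↦ ‖v - e‖ ^ 2 • (v + e)) w := by fun_prop
  have hdB : DifferentiableAt ℝ (fun v ↦ ‖v + e‖ ^ 2 • (v - e)) w := by fun_prop
  rw [divergence_sub hdA hdB,
    divergence_smul hA.differentiableAt (by fun_prop),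
    divergence_smul hB.differentiableAt (by fun_prop), hA.fderiv, hB.fderiv,
    divergence_add_const, divergence_sub_const]
  simp only [smul_apply, innerSL_apply_apply, nsmul_eq_mul, real_inner_comm]
  ring

noncomputable def dipolePotential (c : ℝ) (v : E) : ℝ := c * log √(‖v + e‖ ^ 2 / ‖v - e‖ ^ 2)

theorem hasGradientAt_dipolePotential [CompleteSpace E] (c : ℝ) (he : w ≠ e) (he' : w ≠ -e) :
    HasGradientAt (dipolePotential e c) ((c / sqDistProd e w) • dipoleField e w) w := by
  have hA := norm_sub_ne_zero e he
  have hB := norm_add_ne_zero e he'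
  have hlog := (((hasFDerivAt_norm_add_sq e w).log (pow_ne_zero 2 hB)).sub
    ((hasFDerivAt_norm_sub_sq e w).log (pow_ne_zero 2 hA))).const_mul (c / 2)
  have heq : dipolePotential e c =ᶠ[𝓝 w]
      fun v ↦ c / 2 * (log (‖v + e‖ ^ 2) - log (‖v - e‖ ^ 2)) := by
    filter_upwards [eventually_ne_nhds he, eventually_ne_nhds he'] with v hv hv'
    rw [dipolePotential, log_sqrt (by positivity),
      log_div (pow_ne_zero 2 (norm_add_ne_zero e hv')) (pow_ne_zero 2 (norm_sub_ne_zero e hv))]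
    ring
  rw [hasGradientAt_iff_hasFDerivAt]
  refine (hlog.congr_of_eventuallyEq heq).congr_fderiv ?_
  ext v
  simp only [smul_apply, sub_apply, innerSL_apply_apply, toDual_apply_apply, dipoleField,
    sqDistProd, inner_smul_left, inner_sub_left, smul_eq_mul, nsmul_eq_mul,
    RCLike.conj_to_real]
  field_simp
  ring

end Dipole

theorem div_sqrt_pow_mul_div {p : ℝ} (hp : 0 < p) (a b : ℝ) (k : ℕ) :
    (a / √p) ^ k * (b / p) = a ^ k * b * p ^ (-((k : ℝ) + 2) / 2) := by
  rw [div_pow, sqrt_eq_rpow, ← rpow_natCast (p ^ _), ← rpow_mul hp.le,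
    show -((k : ℝ) + 2) / 2 = -(1 / 2 * k + 1) by ring, rpow_neg hp.le, rpow_add_one hp.ne']
  field_simp

section Flux

variable {E : Type*} [NormedAddCommGroup E] [InnerProductSpace ℝ E] [CompleteSpace E]

noncomputable def gradFlux (k : ℕ) (U : E → ℝ) (v : E) : E := ‖gradient U v‖ ^ k • gradient U v

variable {e w : E}

theorem gradFlux_dipolePotential_eventuallyEq (c : ℝ) (k : ℕ) (he : w ≠ e) (he' : w ≠ -e) :
    gradFlux k (dipolePotential e c) =ᶠ[𝓝 w] fun v ↦
      ((2 * ‖e‖ * |c|) ^ k * c * sqDistProd e v ^ (-((k : ℝ) + 2) / 2)) • dipoleField e v := by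
  filter_upwards [eventually_ne_nhds he, eventually_ne_nhds he'] with v hv hv'
  have hP := sqDistProd_pos e hv hv'
  rw [gradFlux, (hasGradientAt_dipolePotential e c hv hv').gradient, norm_smul, norm_dipoleField,
    smul_smul, ← div_sqrt_pow_mul_div hP, norm_div, norm_of_nonneg hP.le, Real.norm_eq_abs]
  congr 3
  have := sqrt_pos.2 hP
  field_simp
  rw [sq_sqrt hP.le]
  ring

theorem differentiableAt_gradFlux_dipolePotential (c : ℝ) (k : ℕ) (he : w ≠ e) (he' : w ≠ -e) :
    DifferentiableAt ℝ (gradFlux k (dipolePotential e c)) w := by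
  refine .congr_of_eventuallyEq ?_ (gradFlux_dipolePotential_eventuallyEq c k he he')
  have hP := (sqDistProd_pos e he he').ne'
  exact ((differentiableAt_const _).mul ((hasFDerivAt_sqDistProd e w).differentiableAt.rpow_const
    (Or.inl hP))).smul (differentiable_dipoleField e w)

theorem divergence_gradFlux_dipolePotential [FiniteDimensional ℝ E] (c : ℝ) {k : ℕ}
    (hk : k + 2 = finrank ℝ E) (he : w ≠ e) (he' : w ≠ -e) :
    divergence (gradFlux k (dipolePotential e c)) w = 0 := by
  set r : ℝ := -((k : ℝ) + 2) / 2
  set K := (2 * ‖e‖ * |c|) ^ k * c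
  have hP := sqDistProd_pos e he he'
  have hφ : HasFDerivAt (fun v ↦ K * sqDistProd e v ^ r)
      (K • (r * sqDistProd e w ^ (r - 1)) • fderiv ℝ (sqDistProd e) w) w :=
    ((hasFDerivAt_sqDistProd e w).differentiableAt.hasFDerivAt.rpow_const
      (Or.inl hP.ne')).const_mul K
  rw [divergence, (gradFlux_dipolePotential_eventuallyEq c k he he').fderiv_eq, ← divergence,
    divergence_smul hφ.differentiableAt (differentiable_dipoleField e w), hφ.fderiv,
    divergence_dipoleField, smul_apply, smul_apply, fderiv_sqDistProd_dipoleField, ← hk,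
    rpow_sub_one hP.ne']
  simp only [smul_eq_mul, r]
  field_simp
  push_cast
  ring

end Flux

section HalfSpace

variable {n : ℕ}

theorem AA_eq_norm_sub_sq (z : EuclideanSpace ℝ (Fin (n + 1))) :
    AA z = ‖z - EuclideanSpace.single (Fin.last n) 1‖ ^ 2 := by
  rw [EuclideanSpace.norm_sq_eq, Fin.sum_univ_castSucc]
  simp [AA, Fin.castSucc_ne_last]
  ring

theorem BB_eq_norm_add_sq (z : EuclideanSpace ℝ (Fin (n + 1))) :
    BB z = ‖z + EuclideanSpace.single (Fin.last n) 1‖ ^ 2 := by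
  rw [EuclideanSpace.norm_sq_eq, Fin.sum_univ_castSucc]
  simp [BB, Fin.castSucc_ne_last]
  ring

theorem UN_eq_dipolePotential :
    UN (n := n) = dipolePotential (EuclideanSpace.single (Fin.last n) 1)
      (sphereArea (n + 1) ^ (-(1 : ℝ) / n)) :=
  funext fun z ↦ by rw [UN, dipolePotential, AA_eq_norm_sub_sq, BB_eq_norm_add_sq]

end HalfSpace

/-- `U_N` is `N`-harmonic on `ℝ^N_+ \ {(0,1)}`: `div(|∇U_N|^{N−2}∇U_N) = 0` there. -/
theorem stmt8 {n : ℕ} (hn : 1 ≤ n) (z : EuclideanSpace ℝ (Fin (n + 1)))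
    (hy : 0 < z (Fin.last n)) (hz : z ≠ EuclideanSpace.single (Fin.last n) 1) :
    DifferentiableAt ℝ (FN (n := n)) z ∧
    ∑ i, fderiv ℝ (FN (n := n)) z (EuclideanSpace.single i 1) i = 0 := by
  have he' : z ≠ -EuclideanSpace.single (Fin.last n) 1 := by
    rintro rfl
    norm_num at hy
  have hk : n - 1 + 2 = finrank ℝ (EuclideanSpace ℝ (Fin (n + 1))) := by
    rw [finrank_euclideanSpace_fin]
    omega
  have hF : FN (n := n) = gradFlux (n - 1) UN := rfl
  rw [hF, UN_eq_dipolePotential, ← divergence_eq_sum]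
  exact ⟨differentiableAt_gradFlux_dipolePotential _ _ hz he',
    divergence_gradFlux_dipolePotential _ hk hz he'⟩
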